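/- arXiv:2102.13612 — 2 statements merged into one kernel-verified Lean document; each statement's English description precedes it below -/
import Mathlib

section
/- If τ is an idempotent in H(S_T) with τ > θ_a θ_a^{-1} for some a ∈ A, and τ ∉ {θ_b θ_b^{-1} : b ∈ A}, then τ = θ_{x_1}^{-1}θ_{x_1} ⋯ θ_{x_n}^{-1}θ_{x_n} for some n ≥ 1 and x_1,…,x_n ∈ A. -/
def IsWord {A : Type} (T : A → A → Prop) (w : List A) : Prop := w ≠ [] ∧ w.Chain' T

def PMap (A : Type) := List A → Option (List A)

def pzero {A : Type} : PMap A := fun _ => none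

def pcomp {A : Type} (f g : PMap A) : PMap A := fun x => (g x).bind f

open Classical in
noncomputable def pinv {A : Type} (f : PMap A) : PMap A := fun y =>
  if h : ∃ x, f x = some y then some h.choose else none

open Classical in
noncomputable def theta {A : Type} (T : A → A → Prop) (w : List A) : PMap A := fun x =>
  if IsWord T x ∧ IsWord T (w ++ x) then some (w ++ x) else none

open Classical in
noncomputable def pid {A : Type} (T : A → A → Prop) : PMap A := fun x =>
  if IsWord T x then some x else none

noncomputable def idemL {A : Type} (T : A → A → Prop) (a : A) : PMap A :=
  pcomp (pinv (theta T [a])) (theta T [a])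

noncomputable def rgIdem {A : Type} (T : A → A → Prop) (a : A) : PMap A :=
  pcomp (theta T [a]) (pinv (theta T [a]))

noncomputable def prodIdems {A : Type} (T : A → A → Prop) (xs : List A) : PMap A :=
  (xs.map (idemL T)).foldr pcomp (pid T)

def pdom {A : Type} (f : PMap A) : Set (List A) := {x | f x ≠ none}

inductive Hull {A : Type} (T : A → A → Prop) : PMap A → Prop
  | gen {w : List A} : IsWord T w → Hull T (theta T w)
  | zero : Hull T pzero
  | comp {f g : PMap A} : Hull T f → Hull T g → Hull T (pcomp f g)
  | inv {f : PMap A} : Hull T f → Hull T (pinv f)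

open Classical in
noncomputable def smul {A : Type} (T : A → A → Prop) :
    Option (List A) → Option (List A) → Option (List A)
  | some u, some v => if IsWord T (u ++ v) then some (u ++ v) else none
  | _, _ => none

/-!
Every nonzero element of the hull is a normal form `thetaNF T u xs v`: normal forms are closed
under inversion, and the composite of `thetaNF T u xs v` and `thetaNF T p ys q` is `pzero` unless
one of `v` and `p` is a prefix of the other, and otherwise again a normal form or `pzero`.
An idempotent above `θ_a θ_a⁻¹` fixes the word `ab` for a follower `b` of `a`, which forces
`u = v` with `u` of length at most one. If `u = [a]` the idempotent is `θ_a θ_a⁻¹` itself, so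
`u = []` and it is a product of the `θ_x⁻¹ θ_x`.
-/

namespace PMap

variable {A : Type}

theorem ext {f g : PMap A} (h : ∀ x z, f x = some z ↔ g x = some z) : f = g :=
  funext fun x => Option.ext (h x)

theorem pcomp_apply_eq_some {f g : PMap A} {x z : List A} :
    pcomp f g x = some z ↔ ∃ m, g x = some m ∧ f m = some z :=
  Option.bind_eq_some_iff

theorem eq_pinv {f g : PMap A} (h : ∀ x z, f x = some z ↔ g z = some x) : f = pinv g := by
  funext x
  unfold pinv
  split_ifs with hx
  · exact (h x hx.choose).2 hx.choose_spec
  · cases hf : f x with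
    | none => rfl
    | some z => exact absurd ⟨z, (h x z).1 hf⟩ hx

theorem pinv_pzero : pinv (pzero : PMap A) = pzero :=
  (eq_pinv fun _ _ => by simp [pzero]).symm

theorem pcomp_pzero_left (g : PMap A) : pcomp pzero g = pzero := by
  funext x
  unfold pcomp pzero
  cases g x <;> rfl

theorem pcomp_pzero_right (f : PMap A) : pcomp f pzero = pzero := rfl

end PMap

section

variable {A : Type} {T : A → A → Prop}

theorem isWord_iff {w : List A} : IsWord T w ↔ w ≠ [] ∧ w.IsChain T := Iff.rfl

theorem isWord_append_append {s p : List A} (y : List A) (hp : p ≠ []) :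
    IsWord T (s ++ p ++ y) ↔ (s ++ p).IsChain T ∧ IsWord T (p ++ y) := by
  simp only [isWord_iff, ne_eq, List.append_eq_nil_iff, hp, false_and, and_false,
    not_false_eq_true, true_and]
  refine ⟨fun h => ⟨h.left_of_append, ?_⟩, fun ⟨h₁, h₂⟩ => h₁.append_overlap h₂ hp⟩
  rw [List.append_assoc] at h
  exact h.right_of_append

theorem isWord_cons_append {a : A} {p : List A} (y : List A) (hp : p ≠ []) :
    IsWord T (a :: (p ++ y)) ↔ (a :: p).IsChain T ∧ IsWord T (p ++ y) :=
  isWord_append_append (s := [a]) y hp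

theorem isWord_append_iff_getLast {v y : List A} (hv : v.IsChain T) (hy : IsWord T y) :
    IsWord T (v ++ y) ↔ ∀ a ∈ v.getLast?, IsWord T (a :: y) := by
  rcases eq_or_ne v [] with rfl | hv₀
  · simpa using hy
  · obtain ⟨s, a, rfl⟩ := (List.eq_nil_or_concat' v).resolve_left hv₀
    rw [isWord_append_append y (List.cons_ne_nil a [])]
    simp [hv]

variable (T) in
def Admissible (u xs v y : List A) : Prop :=
  IsWord T y ∧ IsWord T (u ++ y) ∧ IsWord T (v ++ y) ∧ ∀ a ∈ xs, IsWord T (a :: y)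

theorem admissible_comm {u xs v y : List A} : Admissible T u xs v y ↔ Admissible T v xs u y := by
  simp only [Admissible, and_left_comm (a := IsWord T (u ++ y))]

variable (T) in
open Classical in
/-- `θ_u θ_{x₁}⁻¹θ_{x₁} ⋯ θ_{xₙ}⁻¹θ_{xₙ} θ_v⁻¹` for `xs = [x₁, …, xₙ]`. -/
noncomputable def thetaNF (u xs v : List A) : PMap A := fun x =>
  if v <+: x ∧ Admissible T u xs v (x.drop v.length) then some (u ++ x.drop v.length) else none

theorem thetaNF_apply_eq_some {u xs v x z : List A} :
    thetaNF T u xs v x = some z ↔ ∃ y, x = v ++ y ∧ z = u ++ y ∧ Admissible T u xs v y := by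
  unfold thetaNF
  constructor
  · intro h
    split_ifs at h with hx
    obtain ⟨⟨⟨y, rfl⟩, hy⟩, rfl⟩ := And.intro hx (Option.some.inj h)
    simp only [List.drop_left] at hy ⊢
    exact ⟨y, rfl, rfl, hy⟩
  · rintro ⟨y, rfl, rfl, hy⟩
    simp [hy]

theorem thetaNF_ext {u xs xs' v : List A}
    (h : ∀ y, Admissible T u xs v y ↔ Admissible T u xs' v y) :
    thetaNF T u xs v = thetaNF T u xs' v :=
  PMap.ext fun x z => by simp only [thetaNF_apply_eq_some, h]

theorem pinv_thetaNF (u xs v : List A) : pinv (thetaNF T u xs v) = thetaNF T v xs u := by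
  refine (PMap.eq_pinv fun x z => ?_).symm
  simp only [thetaNF_apply_eq_some, admissible_comm (u := v)]
  exact ⟨fun ⟨y, h₁, h₂, h⟩ => ⟨y, h₂, h₁, h⟩, fun ⟨y, h₁, h₂, h⟩ => ⟨y, h₂, h₁, h⟩⟩

theorem theta_eq_thetaNF (w : List A) : theta T w = thetaNF T w [] [] :=
  PMap.ext fun x z => by
    simp only [thetaNF_apply_eq_some, Admissible, theta, List.nil_append, exists_eq_left',
      List.not_mem_nil, IsEmpty.forall_iff, implies_true, and_true]
    grind

theorem pcomp_thetaNF_apply_eq_some {u xs v p ys q x z : List A} :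
    pcomp (thetaNF T u xs v) (thetaNF T p ys q) x = some z ↔
      ∃ y w, x = q ++ y ∧ p ++ y = v ++ w ∧ z = u ++ w ∧
        Admissible T p ys q y ∧ Admissible T u xs v w := by
  simp only [PMap.pcomp_apply_eq_some, thetaNF_apply_eq_some]
  constructor
  · rintro ⟨_, ⟨y, rfl, rfl, hy⟩, w, hw, rfl, hw'⟩
    exact ⟨y, w, rfl, hw, rfl, hy, hw'⟩
  · rintro ⟨y, w, rfl, hw, rfl, hy, hw'⟩
    exact ⟨_, ⟨y, rfl, rfl, hy⟩, w, hw, rfl, hw'⟩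

theorem pcomp_thetaNF_eq_pinv (u xs v p ys q : List A) :
    pcomp (thetaNF T u xs v) (thetaNF T p ys q) =
      pinv (pcomp (thetaNF T q ys p) (thetaNF T v xs u)) := by
  refine PMap.eq_pinv fun x z => ?_
  simp only [pcomp_thetaNF_apply_eq_some, admissible_comm (u := v), admissible_comm (u := q)]
  exact ⟨fun ⟨y, w, h₁, h₂, h₃, h₄, h₅⟩ => ⟨w, y, h₃, h₂.symm, h₁, h₅, h₄⟩,
    fun ⟨w, y, h₁, h₂, h₃, h₄, h₅⟩ => ⟨y, w, h₃, h₂.symm, h₁, h₅, h₄⟩⟩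

theorem pcomp_thetaNF_of_not_prefix {u xs v p ys q : List A} (hvp : ¬v <+: p) (hpv : ¬p <+: v) :
    pcomp (thetaNF T u xs v) (thetaNF T p ys q) = pzero := by
  refine PMap.ext fun x z => ?_
  simp only [pcomp_thetaNF_apply_eq_some, pzero, reduceCtorEq, iff_false]
  rintro ⟨y, w, -, hyw, -⟩
  rcases List.prefix_or_prefix_of_prefix ⟨y, hyw⟩ ⟨w, rfl⟩ with h | h
  exacts [hpv h, hvp h]

theorem pcomp_thetaNF_append_apply_eq_some {u xs v p ys q x z : List A} :
    pcomp (thetaNF T u xs v) (thetaNF T (v ++ p) ys q) x = some z ↔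
      ∃ y, x = q ++ y ∧ z = u ++ (p ++ y) ∧
        Admissible T (v ++ p) ys q y ∧ Admissible T u xs v (p ++ y) := by
  simp only [pcomp_thetaNF_apply_eq_some, List.append_assoc, List.append_cancel_left_eq]
  constructor
  · rintro ⟨y, _, rfl, rfl, rfl, hy, hw⟩
    exact ⟨y, rfl, rfl, hy, hw⟩
  · rintro ⟨y, rfl, rfl, hy, hw⟩
    exact ⟨y, _, rfl, rfl, rfl, hy, hw⟩

theorem pcomp_thetaNF_append_of_iff {u xs v p ys q zs : List A}
    (h : ∀ y, Admissible T (v ++ p) ys q y ∧ Admissible T u xs v (p ++ y) ↔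
      Admissible T (u ++ p) zs q y) :
    pcomp (thetaNF T u xs v) (thetaNF T (v ++ p) ys q) = thetaNF T (u ++ p) zs q :=
  PMap.ext fun x z => by
    simp only [pcomp_thetaNF_append_apply_eq_some, thetaNF_apply_eq_some, h, List.append_assoc]

theorem admissible_and_admissible_iff {u xs v ys q y : List A} (hv : v.IsChain T) :
    Admissible T v ys q y ∧ Admissible T u xs v y ↔
      Admissible T u (xs ++ ys ++ v.getLast?.toList) q y := by
  simp only [Admissible, List.mem_append, Option.mem_toList, or_imp, forall_and]
  by_cases hy : IsWord T y
  · rw [isWord_append_iff_getLast hv hy]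
    tauto
  · simp [hy]

theorem pcomp_thetaNF_self {u xs v ys q : List A} (hv : v.IsChain T) :
    pcomp (thetaNF T u xs v) (thetaNF T v ys q) =
      thetaNF T u (xs ++ ys ++ v.getLast?.toList) q := by
  simpa using pcomp_thetaNF_append_of_iff (p := []) fun y => by
    simpa using admissible_and_admissible_iff hv

theorem admissible_and_admissible_append_iff {u xs v p ys q y : List A} (hp : p ≠ []) :
    Admissible T (v ++ p) ys q y ∧ Admissible T u xs v (p ++ y) ↔
      ((v ++ p).IsChain T ∧ (u ++ p).IsChain T ∧ ∀ a ∈ xs, (a :: p).IsChain T) ∧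
        Admissible T (u ++ p) (ys ++ p.getLast?.toList) q y := by
  simp only [Admissible, List.mem_append, Option.mem_toList, or_imp, forall_and,
    ← List.append_assoc, isWord_append_append y hp, isWord_cons_append y hp]
  by_cases hy : IsWord T y
  · by_cases hvp : (v ++ p).IsChain T
    · rw [isWord_append_iff_getLast hvp.right_of_append hy]
      tauto
    · tauto
  · simp [hy]

open Classical in
theorem pcomp_thetaNF_append {u xs v p ys q : List A} (hp : p ≠ []) :
    pcomp (thetaNF T u xs v) (thetaNF T (v ++ p) ys q) =
      if (v ++ p).IsChain T ∧ (u ++ p).IsChain T ∧ ∀ a ∈ xs, (a :: p).IsChain T then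
        thetaNF T (u ++ p) (ys ++ p.getLast?.toList) q
      else pzero := by
  split_ifs with hc
  · exact pcomp_thetaNF_append_of_iff fun y => by
      rw [admissible_and_admissible_append_iff hp, and_iff_right hc]
  · refine PMap.ext fun x z => ?_
    simp only [pcomp_thetaNF_append_apply_eq_some, admissible_and_admissible_append_iff hp,
      hc, false_and, and_false, exists_false, pzero, reduceCtorEq]

variable (T) in
/-- `thetaNF T [] [] [] = pid T` is not in the hull, hence the last condition. -/
def ValidNF (u xs v : List A) : Prop :=
  u.IsChain T ∧ v.IsChain T ∧ (u ≠ [] ∨ xs ≠ [] ∨ v ≠ [])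

variable (T) in
def HasThetaNF (f : PMap A) : Prop :=
  f = pzero ∨ ∃ u xs v, ValidNF T u xs v ∧ f = thetaNF T u xs v

theorem ValidNF.symm {u xs v : List A} (h : ValidNF T u xs v) : ValidNF T v xs u := by
  obtain ⟨hu, hv, hne⟩ := h
  exact ⟨hv, hu, by tauto⟩

theorem HasThetaNF.pinv {f : PMap A} (hf : HasThetaNF T f) : HasThetaNF T (pinv f) := by
  rcases hf with rfl | ⟨u, xs, v, h, rfl⟩
  · exact Or.inl PMap.pinv_pzero
  · exact Or.inr ⟨v, xs, u, h.symm, pinv_thetaNF u xs v⟩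

theorem hasThetaNF_pcomp_of_prefix {u xs v p ys q : List A} (h₁ : ValidNF T u xs v)
    (h₂ : ValidNF T p ys q) (hvp : v <+: p) :
    HasThetaNF T (pcomp (thetaNF T u xs v) (thetaNF T p ys q)) := by
  obtain ⟨hu, hv, hne⟩ := h₁
  obtain ⟨p, rfl⟩ := hvp
  rcases eq_or_ne p [] with rfl | hp
  · rw [List.append_nil, pcomp_thetaNF_self hv]
    refine Or.inr ⟨u, _, q, ⟨hu, h₂.2.1, ?_⟩, rfl⟩
    simp only [ne_eq, List.append_eq_nil_iff, Option.toList_eq_nil_iff,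
      List.getLast?_eq_none_iff] at hne ⊢
    tauto
  · rw [pcomp_thetaNF_append hp]
    split_ifs with hc
    · exact Or.inr ⟨_, _, q, ⟨hc.2.1, h₂.2.1, by simp [hp]⟩, rfl⟩
    · exact Or.inl rfl

theorem HasThetaNF.pcomp {f g : PMap A} (hf : HasThetaNF T f) (hg : HasThetaNF T g) :
    HasThetaNF T (pcomp f g) := by
  rcases hf with rfl | ⟨u, xs, v, h₁, rfl⟩
  · exact Or.inl (PMap.pcomp_pzero_left g)
  rcases hg with rfl | ⟨p, ys, q, h₂, rfl⟩
  · exact Or.inl (PMap.pcomp_pzero_right _)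
  by_cases hvp : v <+: p
  · exact hasThetaNF_pcomp_of_prefix h₁ h₂ hvp
  by_cases hpv : p <+: v
  · rw [pcomp_thetaNF_eq_pinv]
    exact (hasThetaNF_pcomp_of_prefix h₂.symm h₁.symm hpv).pinv
  · exact Or.inl (pcomp_thetaNF_of_not_prefix hvp hpv)

theorem Hull.hasThetaNF {f : PMap A} (hf : Hull T f) : HasThetaNF T f := by
  induction hf with
  | @gen w hw =>
    exact Or.inr ⟨w, [], [], ⟨hw.2, List.isChain_nil, Or.inl hw.1⟩, theta_eq_thetaNF w⟩
  | zero => exact Or.inl rfl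
  | comp _ _ hf hg => exact hf.pcomp hg
  | inv _ hf => exact hf.pinv

theorem rgIdem_eq_thetaNF (a : A) : rgIdem T a = thetaNF T [a] [] [a] := by
  simp [rgIdem, theta_eq_thetaNF, pinv_thetaNF, pcomp_thetaNF_self List.isChain_nil]

theorem rgIdem_apply_pair {a b : A} (hab : T a b) : rgIdem T a [a, b] = some [a, b] := by
  have hw : IsWord T [a, b] := ⟨List.cons_ne_nil _ _, List.isChain_pair.2 hab⟩
  rw [rgIdem_eq_thetaNF]
  exact thetaNF_apply_eq_some.2
    ⟨[b], rfl, rfl, ⟨List.cons_ne_nil _ _, List.isChain_singleton b⟩, hw, hw, nofun⟩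

theorem idemL_eq_thetaNF (a : A) : idemL T a = thetaNF T [] [a] [] := by
  simp [idemL, theta_eq_thetaNF, pinv_thetaNF, pcomp_thetaNF_self (List.isChain_singleton a)]

theorem prodIdems_eq_thetaNF (xs : List A) : prodIdems T xs = thetaNF T [] xs [] := by
  induction xs with
  | nil =>
    rw [← theta_eq_thetaNF]
    funext x
    by_cases hx : IsWord T x <;> simp [prodIdems, pid, theta, hx]
  | cons a xs ih =>
    change pcomp (idemL T a) (prodIdems T xs) = _
    simp [ih, idemL_eq_thetaNF, pcomp_thetaNF_self List.isChain_nil]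

theorem thetaNF_eq_of_pcomp_eq {u xs : List A}
    (h : pcomp (thetaNF T u xs u) (thetaNF T u [] u) = thetaNF T u [] u) :
    thetaNF T u xs u = thetaNF T u [] u := by
  refine thetaNF_ext fun y => ⟨fun ⟨h₁, h₂, h₃, _⟩ => ⟨h₁, h₂, h₃, nofun⟩, fun hy => ?_⟩
  have hfix : thetaNF T u [] u (u ++ y) = some (u ++ y) := thetaNF_apply_eq_some.2 ⟨y, rfl, rfl, hy⟩
  obtain ⟨m, hm, hxs⟩ := PMap.pcomp_apply_eq_some.1 ((congrFun h (u ++ y)).trans hfix)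
  obtain rfl : u ++ y = m := Option.some.inj (hfix.symm.trans hm)
  obtain ⟨y', hy', -, hxs⟩ := thetaNF_apply_eq_some.1 hxs
  rwa [List.append_cancel_left hy']

end

theorem stmt8_general {A : Type} (T : A → A → Prop) (hT : ∀ a : A, ∃ b : A, T a b)
    (τ : PMap A) (hτ : Hull T τ)
    (habove : ∃ a : A, pcomp τ (rgIdem T a) = rgIdem T a ∧ τ ≠ rgIdem T a)
    (hnotO : ∀ b : A, τ ≠ rgIdem T b) :
    ∃ xs : List A, xs ≠ [] ∧ τ = prodIdems T xs := by
  obtain ⟨a, ha, -⟩ := habove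
  obtain ⟨b, hab⟩ := hT a
  have hfix : τ [a, b] = some [a, b] := by
    have h := congrFun ha [a, b]
    rwa [pcomp, rgIdem_apply_pair hab] at h
  rcases hτ.hasThetaNF with rfl | ⟨u, xs, v, ⟨-, -, hne⟩, rfl⟩
  · simp [pzero] at hfix
  obtain ⟨y, hx, hz, hy, -⟩ := thetaNF_apply_eq_some.1 hfix
  obtain rfl : u = v := List.append_cancel_right (hz.symm.trans hx)
  match u, y, hx with
  | [], _, _ => exact ⟨xs, by simpa using hne, (prodIdems_eq_thetaNF xs).symm⟩
  | [_], _, hx =>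
    obtain ⟨rfl, -⟩ := List.cons_eq_cons.1 hx
    rw [rgIdem_eq_thetaNF] at ha
    exact absurd ((thetaNF_eq_of_pcomp_eq ha).trans (rgIdem_eq_thetaNF a).symm) (hnotO a)
  | _ :: _ :: _, [], _ => exact absurd rfl hy.1
  | _ :: _ :: _, _ :: _, hx => simp at hx

/-- An idempotent of the hull strictly above some `θ_a θ_a⁻¹` and not of the form
`θ_b θ_b⁻¹` is a product `θ_{x₁}⁻¹θ_{x₁} ⋯ θ_{xₙ}⁻¹θ_{xₙ}` with `n ≥ 1`. -/
theorem stmt8 {A : Type} [Fintype A] (T : A → A → Prop) (hT : ∀ a : A, ∃ b : A, T a b)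
    (τ : PMap A) (hτ : Hull T τ) (hidem : pcomp τ τ = τ)
    (habove : ∃ a : A, pcomp τ (rgIdem T a) = rgIdem T a ∧ τ ≠ rgIdem T a)
    (hnotO : ∀ b : A, τ ≠ rgIdem T b) :
    ∃ xs : List A, xs ≠ [] ∧ τ = prodIdems T xs :=
  stmt8_general T hT τ hτ habove hnotO
end

section
/- Let α = θ_{x_1}^{-1}θ_{x_1} ⋯ θ_{x_n}^{-1}θ_{x_n} and β = θ_{y_1}^{-1}θ_{y_1} ⋯ θ_{y_m}^{-1}θ_{y_m} be nonzero idempotents of this form (x_i, y_j ∈ A, neither in O = {θ_a θ_a^{-1} : a ∈ A}). If for every a ∈ A, θ_a θ_a^{-1} ≤ α iff θ_a θ_a^{-1} ≤ β, then α = β. -/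
/-! The products `θ_{x₁}⁻¹θ_{x₁} ⋯ θ_{xₙ}⁻¹θ_{xₙ}` and `θ_aθ_a⁻¹` are partial identities: the former on
the words `w` that every `xᵢ` may precede, i.e. with `T xᵢ (head w)` for all `i`, the latter on the
words of length at least two starting with `a`. Since every letter has a successor, `θ_aθ_a⁻¹ ≤ α`
therefore says exactly that `T xᵢ a` for all `i`, and this family of conditions on `a` determines
the domain of `α`. -/

section PartialIdentity

variable {A : Type}

lemma pcomp_eq_some_iff {f g : PMap A} {x z : List A} :
    pcomp f g x = some z ↔ ∃ y, g x = some y ∧ f y = some z :=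
  Option.bind_eq_some_iff

open Classical in
noncomputable def pidOn (S : Set (List A)) : PMap A := fun x => if x ∈ S then some x else none

lemma pidOn_eq_some_iff {S : Set (List A)} {x z : List A} : pidOn S x = some z ↔ x ∈ S ∧ x = z := by
  unfold pidOn
  split_ifs with hx <;> simp [hx]

lemma eq_pidOn_iff {f : PMap A} {S : Set (List A)} :
    f = pidOn S ↔ ∀ x z, f x = some z ↔ x ∈ S ∧ x = z := by
  refine ⟨fun hf x z => hf ▸ pidOn_eq_some_iff, fun hf => funext fun x => Option.ext fun z => ?_⟩
  rw [hf, pidOn_eq_some_iff]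

lemma pidOn_injective : Function.Injective (pidOn (A := A)) := by
  intro S R h
  ext x
  simpa [pidOn_eq_some_iff] using congrArg (· = some x) (congrFun h x)

lemma pcomp_pidOn (S R : Set (List A)) : pcomp (pidOn S) (pidOn R) = pidOn (R ∩ S) := by
  refine eq_pidOn_iff.2 fun x z => ?_
  simp only [pcomp_eq_some_iff, pidOn_eq_some_iff, Set.mem_inter_iff]
  constructor
  · rintro ⟨y, ⟨hxR, rfl⟩, hxS, rfl⟩
    exact ⟨⟨hxR, hxS⟩, rfl⟩
  · rintro ⟨⟨hxR, hxS⟩, rfl⟩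
    exact ⟨x, ⟨hxR, rfl⟩, hxS, rfl⟩

lemma pcomp_pidOn_eq_right_iff {S R : Set (List A)} :
    pcomp (pidOn S) (pidOn R) = pidOn R ↔ R ⊆ S := by
  rw [pcomp_pidOn, pidOn_injective.eq_iff, Set.inter_eq_left]

end PartialIdentity

section PartialInverse

def PInjective {A : Type} (f : PMap A) : Prop := ∀ x x' y, f x = some y → f x' = some y → x = x'

variable {A : Type} {f : PMap A}

lemma pinv_eq_some_iff (hf : PInjective f) {x y : List A} :
    pinv f y = some x ↔ f x = some y := by
  unfold pinv
  split_ifs with h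
  · rw [Option.some_inj]
    exact ⟨fun hx => hx ▸ h.choose_spec, hf _ _ _ h.choose_spec⟩
  · exact ⟨nofun, fun hx => absurd ⟨x, hx⟩ h⟩

lemma pcomp_pinv_self (hf : PInjective f) :
    pcomp (pinv f) f = pidOn (pdom f) := by
  refine eq_pidOn_iff.2 fun x z => ?_
  simp only [pcomp_eq_some_iff, pinv_eq_some_iff hf, pdom, Set.mem_ofPred_eq,
    Option.ne_none_iff_exists']
  constructor
  · rintro ⟨y, hx, hz⟩
    exact ⟨⟨y, hx⟩, hf _ _ _ hx hz⟩
  · rintro ⟨⟨y, hx⟩, rfl⟩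
    exact ⟨y, hx, hx⟩

lemma pcomp_self_pinv (hf : PInjective f) :
    pcomp f (pinv f) = pidOn {y | ∃ x, f x = some y} := by
  refine eq_pidOn_iff.2 fun y z => ?_
  simp only [pcomp_eq_some_iff, pinv_eq_some_iff hf, Set.mem_ofPred_eq]
  constructor
  · rintro ⟨x, hy, hz⟩
    exact ⟨⟨x, hy⟩, Option.some_inj.1 (hy.symm.trans hz)⟩
  · rintro ⟨⟨x, hy⟩, rfl⟩
    exact ⟨x, hy, hy⟩

end PartialInverse

section Theta

variable {A : Type} {T : A → A → Prop}

lemma isWord_cons_iff {x : List A} (hx : IsWord T x) (c : A) :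
    IsWord T (c :: x) ↔ ∀ b ∈ x.head?, T c b := by
  change c :: x ≠ [] ∧ List.IsChain T (c :: x) ↔ _
  rw [List.isChain_cons]
  exact ⟨fun h => h.2.1, fun h => ⟨List.cons_ne_nil c x, h, hx.2⟩⟩

lemma theta_eq_some_iff {w x z : List A} :
    theta T w x = some z ↔ IsWord T x ∧ IsWord T (w ++ x) ∧ w ++ x = z := by
  unfold theta
  split_ifs with h
  · simp [h]
  · simp only [false_iff]
    exact fun hx => h ⟨hx.1, hx.2.1⟩

lemma pInjective_theta (w : List A) : PInjective (theta T w) := fun _ _ _ hx hx' =>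
  List.append_cancel_left ((theta_eq_some_iff.1 hx).2.2.trans (theta_eq_some_iff.1 hx').2.2.symm)

lemma idemL_eq (a : A) : idemL T a = pidOn {x | IsWord T x ∧ IsWord T (a :: x)} := by
  rw [idemL, pcomp_pinv_self (pInjective_theta _)]
  congr 1
  ext x
  simp [pdom, Option.ne_none_iff_exists', theta_eq_some_iff]

lemma rgIdem_eq (a : A) :
    rgIdem T a = pidOn {y | ∃ x, IsWord T x ∧ IsWord T (a :: x) ∧ a :: x = y} := by
  rw [rgIdem, pcomp_self_pinv (pInjective_theta _)]
  simp [theta_eq_some_iff]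

lemma prodIdems_eq (xs : List A) :
    prodIdems T xs = pidOn {x | IsWord T x ∧ ∀ c ∈ xs, IsWord T (c :: x)} := by
  induction xs with
  | nil => simp only [List.not_mem_nil, IsEmpty.forall_iff, implies_true, and_true]; rfl
  | cons a xs ih =>
    change pcomp (idemL T a) (prodIdems T xs) = _
    rw [ih, idemL_eq, pcomp_pidOn]
    congr 1
    ext x
    simp only [Set.mem_inter_iff, Set.mem_ofPred_eq, List.forall_mem_cons]
    tauto

lemma rgIdem_le_prodIdems_iff (hT : ∀ a : A, ∃ b : A, T a b) (xs : List A) (a : A) :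
    pcomp (prodIdems T xs) (rgIdem T a) = rgIdem T a ↔ ∀ c ∈ xs, T c a := by
  rw [prodIdems_eq, rgIdem_eq, pcomp_pidOn_eq_right_iff]
  constructor
  · intro hsub c hc
    obtain ⟨b, hab⟩ := hT a
    have hb : IsWord T [b] := ⟨List.cons_ne_nil _ _, List.isChain_singleton b⟩
    have hab' : IsWord T [a, b] := (isWord_cons_iff hb a).2 (by simpa using hab)
    have hcab := (hsub ⟨[b], hb, hab', rfl⟩).2 c hc
    simpa using (isWord_cons_iff hab' c).1 hcab
  · rintro hxs _ ⟨x, -, hax, rfl⟩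
    exact ⟨hax, fun c hc => (isWord_cons_iff hax c).2 (by simpa using hxs c hc)⟩

lemma prodIdems_congr {xs ys : List A} (h : ∀ a, (∀ c ∈ xs, T c a) ↔ (∀ c ∈ ys, T c a)) :
    prodIdems T xs = prodIdems T ys := by
  rw [prodIdems_eq, prodIdems_eq]
  congr 1
  ext x
  simp only [Set.mem_ofPred_eq, and_congr_right_iff]
  intro hx
  obtain ⟨b, t, rfl⟩ := List.exists_cons_of_ne_nil hx.1
  simpa [isWord_cons_iff hx] using h b

end Theta

theorem stmt9_general {A : Type} (T : A → A → Prop) (hT : ∀ a : A, ∃ b : A, T a b)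
    (xs ys : List A)
    (h : ∀ a : A,
      (pcomp (prodIdems T xs) (rgIdem T a) = rgIdem T a ↔
       pcomp (prodIdems T ys) (rgIdem T a) = rgIdem T a)) :
    prodIdems T xs = prodIdems T ys :=
  prodIdems_congr fun a => by
    rw [← rgIdem_le_prodIdems_iff hT xs a, ← rgIdem_le_prodIdems_iff hT ys a]
    exact h a

/-- Elements of `O↑ − O` are determined by the elements of `O` below them. -/
theorem stmt9 {A : Type} [Fintype A] (T : A → A → Prop) (hT : ∀ a : A, ∃ b : A, T a b)
    (xs ys : List A) (hxs : xs ≠ []) (hys : ys ≠ [])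
    (hx : prodIdems T xs ≠ pzero) (hy : prodIdems T ys ≠ pzero)
    (h : ∀ a : A,
      (pcomp (prodIdems T xs) (rgIdem T a) = rgIdem T a ↔
       pcomp (prodIdems T ys) (rgIdem T a) = rgIdem T a)) :
    prodIdems T xs = prodIdems T ys :=
  stmt9_general T hT xs ys h
end
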